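/- Let w be a string over a finite alphabet Σ, let q and p be integers with 2 ≤ q ≤ |w| and p ≥ 1, and let P be a string over Σ with |P| = q. Then |Occ(w^p, P)| = p·|Occ(w, P)| + (p−1)·|Occ(suf(w, q−1)·pre(w, q−1), P)|. -/
import Mathlib


/-- `Occ T P` is the set of (1-based) occurrence positions of `P` in `T`:
`{ i : 1 ≤ i ≤ |T|−|P|+1 and T[i:i+|P|−1] = P }`. -/
def Occ {α : Type*} [DecidableEq α] (T P : List α) : Finset ℕ :=
  (Finset.Icc 1 (T.length - P.length + 1)).filter
    (fun i => (T.drop (i - 1)).take P.length = P)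

/-- `pre T k = T[1:min(k,|T|)]`, the prefix of `T` of length at most `k`. -/
def pre {α : Type*} (T : List α) (k : ℕ) : List α := T.take k

/-- `suf T k = T[|T|−min(k,|T|)+1:|T|]`, the suffix of `T` of length at most `k`. -/
def suf {α : Type*} (T : List α) (k : ℕ) : List α := T.drop (T.length - k)

/-- `listPow w p` is the `p`-fold concatenation `w^p`. -/
def listPow {α : Type*} (w : List α) : ℕ → List α
  | 0 => []
  | p + 1 => w ++ listPow w p

section Aux

variable {α : Type*} [DecidableEq α]

lemma mem_Occ_iff (T P : List α) (i : ℕ) :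
    i ∈ Occ T P ↔ (1 ≤ i ∧ i ≤ T.length - P.length + 1) ∧
      (T.drop (i - 1)).take P.length = P := by
  simp [Occ, Finset.mem_filter, Finset.mem_Icc, and_assoc]

/-- the boundary string equals a substring of `w ++ T`. -/
lemma boundary_eq (w T : List α) (q : ℕ) (hq2 : 2 ≤ q) (hqw : q ≤ w.length)
    (hqT : q - 1 ≤ T.length) :
    suf w (q-1) ++ pre T (q-1) = ((w ++ T).drop (w.length - (q-1))).take (2*(q-1)) := by
  have hdl : (w.drop (w.length - (q-1))).length = q - 1 := by
    rw [List.length_drop]; omega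
  rw [List.drop_append_of_le_length (by omega), List.take_append, hdl]
  simp only [suf, pre]
  congr 1
  · exact (List.take_of_length_le (by omega)).symm
  · congr 1
    omega

lemma occ_card_append (w T P : List α) (q : ℕ) (hP : P.length = q) (hq2 : 2 ≤ q)
    (hqw : q ≤ w.length) (hqT : q ≤ T.length) :
    (Occ (w ++ T) P).card =
      (Occ w P).card + (Occ (suf w (q-1) ++ pre T (q-1)) P).card + (Occ T P).card := by
  set m := w.length with hm
  set n := T.length with hn
  set B : List α := suf w (q-1) ++ pre T (q-1) with hB
  have hBlen : B.length = 2*(q-1) := by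
    simp only [hB, List.length_append, suf, pre, List.length_drop, List.length_take, ← hm, ← hn]
    omega
  have hBsub : B = ((w ++ T).drop (m - (q-1))).take (2*(q-1)) :=
    boundary_eq w T q hq2 hqw (by omega)
  -- substring characterization lemmas
  have left_sub : ∀ i : ℕ, i + q ≤ m + 1 → 1 ≤ i →
      ((w ++ T).drop (i-1)).take q = (w.drop (i-1)).take q := by
    intro i h h1
    rw [List.drop_append_of_le_length (by omega),
      List.take_append_of_le_length (by rw [List.length_drop]; omega)]
  have mid_sub : ∀ j : ℕ, 1 ≤ j → j ≤ q - 1 →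
      (B.drop (j-1)).take q = ((w ++ T).drop (m - q + j)).take q := by
    intro j h1 h2
    conv_lhs => rw [hBsub]
    rw [List.drop_take, List.take_take, List.drop_drop]
    have e1 : m - (q-1) + (j - 1) = m - q + j := by omega
    have e2 : min q (2*(q-1) - (j-1)) = q := min_eq_left (by omega)
    rw [e1, e2]
  have right_sub : ∀ k : ℕ, ((w ++ T).drop (m + k)).take q = (T.drop k).take q := by
    intro k
    congr 1
    simp [hm]
  -- the decomposition
  have key : Occ (w ++ T) P =
      (Occ w P ∪ (Occ B P).image (· + (m - q + 1))) ∪ (Occ T P).image (· + m) := by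
    ext i
    simp only [Finset.mem_union, Finset.mem_image, mem_Occ_iff, List.length_append, hP, hBlen,
      ← hm, ← hn]
    constructor
    · rintro ⟨⟨h1, h2⟩, heq⟩
      rcases lt_or_ge (m - q + 1) i with hi | hi
      · rcases lt_or_ge m i with hi2 | hi2
        · right
          refine ⟨i - m, ⟨⟨by omega, by omega⟩, ?_⟩, by omega⟩
          rw [← right_sub (i - m - 1)]
          have e : m + (i - m - 1) = i - 1 := by omega
          rw [e]; exact heq
        · left; right
          refine ⟨i - (m - q + 1), ⟨⟨by omega, by omega⟩, ?_⟩, by omega⟩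
          rw [mid_sub _ (by omega) (by omega)]
          have e : m - q + (i - (m - q + 1)) = i - 1 := by omega
          rw [e]; exact heq
      · left; left
        refine ⟨⟨h1, by omega⟩, ?_⟩
        rw [← left_sub i (by omega) h1]; exact heq
    · rintro ((⟨⟨h1, h2⟩, heq⟩ | ⟨j, ⟨⟨hj1, hj2⟩, heq⟩, rfl⟩) | ⟨k, ⟨⟨hk1, hk2⟩, heq⟩, rfl⟩)
      · exact ⟨⟨h1, by omega⟩, by rw [left_sub i (by omega) h1]; exact heq⟩
      · refine ⟨⟨by omega, by omega⟩, ?_⟩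
        rw [← heq, mid_sub j (by omega) (by omega)]
        have e : j + (m - q + 1) - 1 = m - q + j := by omega
        rw [e]
      · refine ⟨⟨by omega, by omega⟩, ?_⟩
        rw [← heq, ← right_sub (k - 1)]
        have e : k + m - 1 = m + (k - 1) := by omega
        rw [e]
  -- bounds on membership for disjointness
  have boundw : ∀ i ∈ Occ w P, i ≤ m - q + 1 := by
    intro i hi; rw [mem_Occ_iff] at hi
    rw [hP, ← hm] at hi
    omega
  have boundB : ∀ i ∈ (Occ B P).image (· + (m - q + 1)),
      m - q + 2 ≤ i ∧ i ≤ m := by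
    intro i hi
    simp only [Finset.mem_image, mem_Occ_iff, hBlen, hP] at hi
    obtain ⟨j, ⟨⟨hj1, hj2⟩, -⟩, rfl⟩ := hi
    omega
  have boundT : ∀ i ∈ (Occ T P).image (· + m), m + 1 ≤ i := by
    intro i hi
    simp only [Finset.mem_image, mem_Occ_iff] at hi
    obtain ⟨j, ⟨⟨hj1, -⟩, -⟩, rfl⟩ := hi
    omega
  rw [key, Finset.card_union_of_disjoint, Finset.card_union_of_disjoint,
    Finset.card_image_of_injective _ (add_left_injective _),
    Finset.card_image_of_injective _ (add_left_injective _)]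
  · rw [Finset.disjoint_left]
    intro i hi hi'
    have := boundw i hi
    have := boundB i hi'
    omega
  · rw [Finset.disjoint_left]
    intro i hi hi'
    have := boundT i hi'
    rcases Finset.mem_union.mp hi with h | h
    · have := boundw i h; omega
    · have := (boundB i h).2; omega

lemma listPow_length {α : Type*} (w : List α) (p : ℕ) :
    (listPow w p).length = p * w.length := by
  induction p with
  | zero => simp [listPow]
  | succ p ih => simp [listPow, ih]; ring

end Aux

/-- for `2 ≤ q ≤ |w|` and `p ≥ 1`,
`|Occ(w^p,P)| = p·|Occ(w,P)| + (p−1)·|Occ(suf(w,q−1)·pre(w,q−1),P)|`. -/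
theorem qgram_count_pow {α : Type*} [Fintype α] [DecidableEq α]
    (w : List α) (q p : ℕ) (hq2 : 2 ≤ q) (hqw : q ≤ w.length) (hp : 1 ≤ p)
    (P : List α) (hP : P.length = q) :
    (Occ (listPow w p) P).card =
      p * (Occ w P).card +
        (p - 1) * (Occ (suf w (q - 1) ++ pre w (q - 1)) P).card := by
  induction p with
  | zero => omega
  | succ p ih =>
    rcases Nat.eq_zero_or_pos p with rfl | hp'
    · simp [listPow, List.append_nil]
    · have hlen : q ≤ (listPow w p).length := by
        rw [listPow_length]
        calc q ≤ w.length := hqw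
          _ ≤ p * w.length := Nat.le_mul_of_pos_left _ hp'
      have hpre : pre (listPow w p) (q-1) = pre w (q-1) := by
        cases p with
        | zero => omega
        | succ p =>
          simp only [listPow, pre]
          exact List.take_append_of_le_length (by omega)
      have h := occ_card_append w (listPow w p) P q hP hq2 hqw hlen
      rw [show listPow w (p+1) = w ++ listPow w p from rfl, h, hpre, ih hp']
      have h2 : p - 1 + 1 = p := by omega
      have h1 : p + 1 - 1 = p := by omega
      rw [h1]
      nlinarith [h2]
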